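/- Let R = [[-1/2, √3/2], [-√3/2, -1/2]] and τ = exp(2πi/3). Let A : ℝ² → M₂(ℂ) be measurable with A(R⁻¹x) = R⁻¹ A(x) R for all x ∈ ℝ², and let E ⊆ ℝ² be a measurable set with R⁻¹(E) = E. Let w : ℝ² → ℂ be differentiable with w(R⁻¹x) = τ·w(x) for all x ∈ ℝ² (or with w(R⁻¹x) = conj(τ)·w(x) for all x). Assume that the ℂ²-valued function x ↦ conj(w(x))·(A(x) ∇w(x)) is integrable on E. Then ∫_E conj(w(x))·(A(x) ∇w(x)) dx = 0 in ℂ². -/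

import Mathlib

open Complex ComplexConjugate MeasureTheory

/-- The clockwise rotation by `2π/3`: `R = [[-1/2, √3/2],[-√3/2, -1/2]]`. -/
noncomputable def Rm : Matrix (Fin 2) (Fin 2) ℝ :=
  !![-(1/2), Real.sqrt 3 / 2; -(Real.sqrt 3) / 2, -(1/2)]

/-- `R` regarded as a complex matrix. -/
noncomputable def Rc : Matrix (Fin 2) (Fin 2) ℂ := Rm.map Complex.ofReal

/-- `τ = exp(2πi/3)`. -/
noncomputable def τ : ℂ := Complex.exp (2 * Real.pi * Complex.I / 3)

/-- The gradient of a function `w : ℝ² → ℂ`: the vector of its partial derivatives at `x`. -/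
noncomputable def grad (w : (Fin 2 → ℝ) → ℂ) (x : Fin 2 → ℝ) : Fin 2 → ℂ :=
  fun i => fderiv ℝ w x (Pi.single i 1)


/-!
The rotation `x ↦ R⁻¹x` preserves Lebesgue measure and `E`, and the hypotheses make the
integrand `F x = conj (w x) • A x ∇w x` equivariant: `F (R⁻¹x) = R⁻¹ F x`. Indeed, the chain
rule turns `w ∘ R⁻¹ = μ w` (`μ = τ` or `conj τ`) into `∇w (R⁻¹x) = μ R⁻¹ ∇w x`, the
conjugation of `A` absorbs the rotation, and the factors `conj μ` and `μ` cancel because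
`|μ| = 1`. Changing variables, the integral `I` satisfies `R⁻¹ I = I`, and since `1` is not an
eigenvalue of `R`, `I = 0`.
-/

open Matrix

noncomputable def mulVecEquiv {𝕜 ι : Type*} [NontriviallyNormedField 𝕜] [CompleteSpace 𝕜]
    [Fintype ι] [DecidableEq ι] (M : Matrix ι ι 𝕜) (hM : IsUnit M.det) :
    (ι → 𝕜) ≃L[𝕜] (ι → 𝕜) :=
  (M.toLinearEquiv' (M.invertibleOfIsUnitDet hM)).toContinuousLinearEquiv

lemma measurePreserving_mulVec {ι : Type*} [Fintype ι] [DecidableEq ι] (M : Matrix ι ι ℝ)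
    (hM : |M.det| = 1) : MeasurePreserving (M *ᵥ ·) volume volume := by
  have hM0 : M.det ≠ 0 := fun h => by simp [h] at hM
  refine ⟨(Matrix.toLin' M).continuous_of_finiteDimensional.measurable, ?_⟩
  have hmap := Real.map_matrix_volume_pi_eq_smul_volume_pi hM0
  rwa [abs_inv, hM, inv_one, ENNReal.ofReal_one, one_smul] at hmap

lemma setIntegral_fixed_of_equivariant {α 𝕜 V : Type*} [MeasurableSpace α] {μ : Measure α}
    [RCLike 𝕜] [NormedAddCommGroup V] [NormedSpace 𝕜 V] [NormedSpace ℝ V]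
    {g : α → α} (hg : MeasurePreserving g μ μ) (hg' : MeasurableEmbedding g)
    {E : Set α} (hE : g ⁻¹' E = E) (L : V ≃L[𝕜] V) {F : α → V} (hF : ∀ x, F (g x) = L (F x)) :
    L (∫ x in E, F x ∂μ) = ∫ x in E, F x ∂μ := by
  rw [← L.integral_comp_comm]
  simp_rw [← hF]
  conv_lhs => rw [← hE]
  exact hg.setIntegral_preimage_emb hg' F E

lemma grad_const_mul (c : ℂ) (w : (Fin 2 → ℝ) → ℂ) (x : Fin 2 → ℝ) :
    grad (fun y => c * w y) x = c • grad w x := by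
  funext i
  simp [grad, ← smul_eq_mul, ← Pi.smul_def, fderiv_const_smul_field]

lemma grad_comp_mulVec (M : Matrix (Fin 2) (Fin 2) ℝ) (hM : IsUnit M.det)
    (w : (Fin 2 → ℝ) → ℂ) (x : Fin 2 → ℝ) :
    grad (fun y => w (M *ᵥ y)) x = (M.map ofReal)ᵀ *ᵥ grad w (M *ᵥ x) := by
  funext i
  have hchain := (mulVecEquiv M hM).comp_right_fderiv (f := w) (x := x)
  have hcol : M *ᵥ Pi.single i 1 = ∑ j, M j i • Pi.single j 1 := by
    ext k
    simp [Pi.single_apply]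
  calc fderiv ℝ (w ∘ mulVecEquiv M hM) x (Pi.single i 1)
      = fderiv ℝ w (M *ᵥ x) (M *ᵥ Pi.single i 1) := by rw [hchain]; rfl
    _ = ∑ j, (M j i : ℂ) * grad w (M *ᵥ x) j := by simp [hcol, grad, Complex.real_smul]
    _ = ((M.map ofReal)ᵀ *ᵥ grad w (M *ᵥ x)) i := by simp [Matrix.mulVec, dotProduct]

lemma sqrt_three_mul_self : √3 * √3 = 3 :=
  Real.mul_self_sqrt (by norm_num)

lemma Rm_det : Rm.det = 1 := by
  rw [Rm, Matrix.det_fin_two_of]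
  linear_combination (1 / 4 : ℝ) * sqrt_three_mul_self

lemma isUnit_Rm_det : IsUnit Rm.det := by
  simp [Rm_det]

lemma Rm_transpose_mul_self : Rmᵀ * Rm = 1 := by
  ext i j
  fin_cases i <;> fin_cases j <;> simp [Rm, Matrix.mul_apply, Fin.sum_univ_two] <;>
    ring_nf <;> norm_num

lemma Rm_inv_eq_transpose : Rm⁻¹ = Rmᵀ :=
  Matrix.inv_eq_left_inv Rm_transpose_mul_self

lemma Rm_sub_one_det : (Rm - 1).det = 3 := by
  rw [Matrix.det_fin_two]
  simp [Rm]
  linear_combination (1 / 4 : ℝ) * sqrt_three_mul_self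

lemma Rc_det : Rc.det = 1 := by
  have h := (Complex.ofRealHom.map_det Rm).symm
  rwa [Rm_det, map_one] at h

lemma isUnit_Rc_det : IsUnit Rc.det := by
  simp [Rc_det]

lemma Rm_inv_map_transpose : (Rm⁻¹.map ofReal)ᵀ = Rc := by
  rw [Rm_inv_eq_transpose, Matrix.transpose_map, Matrix.transpose_transpose, Rc]

lemma eq_zero_of_Rc_inv_mulVec_eq_self {v : Fin 2 → ℂ} (hv : Rc⁻¹ *ᵥ v = v) : v = 0 := by
  have hdet : (Rc - 1).det = 3 := by
    rw [Rc, ← Matrix.map_one _ ofReal_zero ofReal_one, ← Matrix.map_sub _ ofReal_sub]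
    have h := (Complex.ofRealHom.map_det (Rm - 1)).symm
    rw [Rm_sub_one_det] at h
    exact_mod_cast h
  refine Matrix.eq_zero_of_mulVec_eq_zero (M := Rc - 1) (by norm_num [hdet]) ?_
  have hfix : Rc *ᵥ v = v := by
    conv_lhs => rw [← hv]
    rw [Matrix.mulVec_mulVec, Matrix.mul_nonsing_inv _ isUnit_Rc_det, Matrix.one_mulVec]
  rw [Matrix.sub_mulVec, hfix, Matrix.one_mulVec, sub_self]

lemma conj_tau_mul_tau : conj τ * τ = 1 := by
  rw [τ, Complex.conj_mul', Complex.norm_exp]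
  simp

lemma grad_apply_Rm_inv_mulVec {μ : ℂ} {w : (Fin 2 → ℝ) → ℂ}
    (hw : ∀ x, w (Rm⁻¹ *ᵥ x) = μ * w x) (x : Fin 2 → ℝ) :
    grad w (Rm⁻¹ *ᵥ x) = μ • Rc⁻¹ *ᵥ grad w x := by
  have hchain := grad_comp_mulVec Rm⁻¹ (by simp [Rm_det]) w x
  simp_rw [hw, grad_const_mul, Rm_inv_map_transpose] at hchain
  rw [← Matrix.mulVec_smul, hchain, Matrix.mulVec_mulVec, Matrix.nonsing_inv_mul _ isUnit_Rc_det,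
    Matrix.one_mulVec]

lemma integrand_apply_Rm_inv_mulVec {A : (Fin 2 → ℝ) → Matrix (Fin 2) (Fin 2) ℂ}
    (hA : ∀ x, A (Rm⁻¹ *ᵥ x) = Rc⁻¹ * A x * Rc) {μ : ℂ} (hμ : conj μ * μ = 1)
    {w : (Fin 2 → ℝ) → ℂ} (hw : ∀ x, w (Rm⁻¹ *ᵥ x) = μ * w x) (x : Fin 2 → ℝ) :
    conj (w (Rm⁻¹ *ᵥ x)) • A (Rm⁻¹ *ᵥ x) *ᵥ grad w (Rm⁻¹ *ᵥ x)
      = Rc⁻¹ *ᵥ (conj (w x) • A x *ᵥ grad w x) := by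
  rw [hA, grad_apply_Rm_inv_mulVec hw, hw, map_mul, Matrix.mulVec_smul, Matrix.mulVec_mulVec,
    Matrix.mul_assoc (Rc⁻¹ * A x), Matrix.mul_nonsing_inv _ isUnit_Rc_det, Matrix.mul_one,
    ← Matrix.mulVec_mulVec, Matrix.mulVec_smul Rc⁻¹, smul_smul]
  congr 1
  linear_combination conj (w x) * hμ

theorem statement8_general (A : (Fin 2 → ℝ) → Matrix (Fin 2) (Fin 2) ℂ)
    (hAsym : ∀ x, A (Rm⁻¹.mulVec x) = Rc⁻¹ * A x * Rc)
    (E : Set (Fin 2 → ℝ)) (hER : Rm.mulVec ⁻¹' E = E)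
    (w : (Fin 2 → ℝ) → ℂ)
    (hwR : (∀ x, w (Rm⁻¹.mulVec x) = τ * w x)
        ∨ (∀ x, w (Rm⁻¹.mulVec x) = (starRingEnd ℂ) τ * w x)) :
    (∫ x in E, conj (w x) • (A x).mulVec (grad w x)) = (0 : Fin 2 → ℂ) := by
  obtain ⟨μ, hμ, hwμ⟩ : ∃ μ : ℂ, conj μ * μ = 1 ∧ ∀ x, w (Rm⁻¹ *ᵥ x) = μ * w x := by
    rcases hwR with h | h
    · exact ⟨τ, conj_tau_mul_tau, h⟩
    · exact ⟨conj τ, by rw [conj_conj, mul_comm, conj_tau_mul_tau], h⟩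
  have hEinv : (Rm⁻¹ *ᵥ ·) ⁻¹' E = E := by
    conv_lhs => rw [← hER]
    ext x
    simp only [Set.mem_preimage, Matrix.mulVec_mulVec, Matrix.mul_nonsing_inv _ isUnit_Rm_det,
      Matrix.one_mulVec]
  apply eq_zero_of_Rc_inv_mulVec_eq_self
  exact setIntegral_fixed_of_equivariant
    (measurePreserving_mulVec _ (by simp [Rm_det]))
    (mulVecEquiv Rm⁻¹ (by simp [Rm_det])).toHomeomorph.measurableEmbedding hEinv
    (mulVecEquiv Rc⁻¹ (by simp [Rc_det]))
    (integrand_apply_Rm_inv_mulVec hAsym hμ hwμ)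

/-- under rotational invariance of `A` and of `E`, and a rotation
eigenvalue `τ` or `conj τ` for `w`, the ℂ²-valued integral
`∫_E conj(w(x))·(A(x)∇w(x)) dx` vanishes. -/
theorem statement8 (A : (Fin 2 → ℝ) → Matrix (Fin 2) (Fin 2) ℂ)
    (hAmeas : ∀ k l, Measurable fun x => A x k l)
    (hAsym : ∀ x, A (Rm⁻¹.mulVec x) = Rc⁻¹ * A x * Rc)
    (E : Set (Fin 2 → ℝ)) (hE : MeasurableSet E) (hER : Rm.mulVec ⁻¹' E = E)
    (w : (Fin 2 → ℝ) → ℂ) (hw : Differentiable ℝ w)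
    (hwR : (∀ x, w (Rm⁻¹.mulVec x) = τ * w x)
        ∨ (∀ x, w (Rm⁻¹.mulVec x) = (starRingEnd ℂ) τ * w x))
    (hint : IntegrableOn (fun x => conj (w x) • (A x).mulVec (grad w x)) E) :
    (∫ x in E, conj (w x) • (A x).mulVec (grad w x)) = (0 : Fin 2 → ℂ) :=
  statement8_general A hAsym E hER w hwR
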